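/- Let 1 < p ≤ q < ∞, let v, w be weights on (a,b), and suppose that C > 0 is such that (∫_a^b (∫_a^t f)^q w(t) dt)^{1/q} ≤ C (∫_a^b f^p v)^{1/p} holds for all f ∈ M⁺(a,b). Then for every ε > 0 there is a constant c, depending only on p, q and ε, such that A_ε ≤ c · C; in particular A_ε < ∞ for every ε > 0. -/

import Mathlib

open MeasureTheory Set Filter
open scoped ENNReal Topology

/-- The open subinterval of `ℝ` with extended-real endpoints `a` and `b`. -/
def EIoo (a b : EReal) : Set ℝ := {x : ℝ | a < (x : EReal) ∧ (x : EReal) < b}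

/-- A weight on `(a,b)`: a measurable function which is positive and finite a.e. on `(a,b)`. -/
def IsWeight (a b : EReal) (v : ℝ → ℝ≥0∞) : Prop :=
  Measurable v ∧ ∀ᵐ x ∂(volume.restrict (EIoo a b)), v x ≠ 0 ∧ v x ≠ ∞

/-- The function `V` in the case `1 < p`:  `V(t) = (∫_a^t v^{1-p'})^{1/p'}`, `p' = p/(p-1)`. -/
noncomputable def Vp (a : EReal) (p : ℝ) (v : ℝ → ℝ≥0∞) (t : ℝ) : ℝ≥0∞ :=
  (∫⁻ s in EIoo a (t : EReal), v s ^ (1 - p / (p - 1))) ^ ((p - 1) / p)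

/-- The function `V` in the case `p = 1`:  `V(t) = ess sup_{s ∈ (a,t)} 1/v(s)`. -/
noncomputable def V1 (a : EReal) (v : ℝ → ℝ≥0∞) (t : ℝ) : ℝ≥0∞ :=
  essSup (fun s => (v s)⁻¹) (volume.restrict (EIoo a (t : EReal)))

/-- `A_ε = sup_{t ∈ (a,b)} V(t)^{-ε} (∫_a^t V^{q(ε+1)} w)^{1/q}`. -/
noncomputable def Aeps (a b : EReal) (q ε : ℝ) (V w : ℝ → ℝ≥0∞) : ℝ≥0∞ :=
  ⨆ t ∈ EIoo a b,
    V t ^ (-ε) * (∫⁻ s in EIoo a (t : EReal), V s ^ (q * (ε + 1)) * w s) ^ (1 / q)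

/-- `B_{1,ε} = (∫_a^b (∫_a^t V^{q(ε+1)} w)^{r/p} V(t)^{q(ε+1)-εr} w(t) dt)^{1/r}`. -/
noncomputable def B1 (a b : EReal) (p q r ε : ℝ) (V w : ℝ → ℝ≥0∞) : ℝ≥0∞ :=
  (∫⁻ t in EIoo a b,
      (∫⁻ s in EIoo a (t : EReal), V s ^ (q * (ε + 1)) * w s) ^ (r / p) *
        (V t ^ (q * (ε + 1) - ε * r) * w t)) ^ (1 / r)

/-- The weighted Hardy inequality with constant `C`, case `p > 1`
(`RHS = C (∫_a^b f^p v)^{1/p}`). -/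
def HardyP (a b : EReal) (p q : ℝ) (v w : ℝ → ℝ≥0∞) (C : ℝ≥0∞) : Prop :=
  ∀ f : ℝ → ℝ≥0∞, Measurable f →
    (∫⁻ t in EIoo a b, (∫⁻ s in EIoo a (t : EReal), f s) ^ q * w t) ^ (1 / q)
      ≤ C * (∫⁻ x in EIoo a b, f x ^ p * v x) ^ (1 / p)

/-- The weighted Hardy inequality with constant `C`, case `p = 1`
(`RHS = C ∫_a^b f v`). -/
def Hardy1 (a b : EReal) (q : ℝ) (v w : ℝ → ℝ≥0∞) (C : ℝ≥0∞) : Prop :=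
  ∀ f : ℝ → ℝ≥0∞, Measurable f →
    (∫⁻ t in EIoo a b, (∫⁻ s in EIoo a (t : EReal), f s) ^ q * w t) ^ (1 / q)
      ≤ C * ∫⁻ x in EIoo a b, f x * v x

/-- `A_ε < ∞`, including the requirement that every subexpression (in particular
`V(t)` and the inner integral) is finite for every `t ∈ (a,b)`. -/
def AFin (a b : EReal) (q ε : ℝ) (V w : ℝ → ℝ≥0∞) : Prop :=
  (∀ t ∈ EIoo a b,
      V t ≠ ∞ ∧ (∫⁻ s in EIoo a (t : EReal), V s ^ (q * (ε + 1)) * w s) ≠ ∞) ∧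
    Aeps a b q ε V w ≠ ∞

/-- `B_{1,ε} < ∞`, including the requirement that every subexpression (in particular
`V(t)` and the inner integral) is finite for every `t ∈ (a,b)`. -/
def B1Fin (a b : EReal) (p q r ε : ℝ) (V w : ℝ → ℝ≥0∞) : Prop :=
  (∀ t ∈ EIoo a b,
      V t ≠ ∞ ∧ (∫⁻ s in EIoo a (t : EReal), V s ^ (q * (ε + 1)) * w s) ≠ ∞) ∧
    B1 a b p q r ε V w ≠ ∞

/-! Testing the Hardy inequality with `f = v^{1-p'}` on `(a,x)` gives
`∫_x^b w ≤ C^q U(x)^{q/p-q}`, where `U = V^{p'}`. Since `U` is monotone, the same bound then holds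
for the `w`-measure of every superlevel set `{s < t : λ < U(s)}` with `λ` in place of `U(x)`.
Splitting `(a,t)` dyadically according to the value of `U` relative to `U(t)` and summing the
resulting geometric series gives `∫_a^t U^{q(ε+1)/p'} w ≤ c^q C^q U(t)^{qε/p'}`, which is
`A_ε ≤ c C`. -/

namespace ENNReal

theorem rpow_le_rpow_of_nonpos {x y : ℝ≥0∞} {z : ℝ} (hxy : x ≤ y) (hz : z ≤ 0) :
    y ^ z ≤ x ^ z := by
  have h := ENNReal.inv_le_inv.2 (rpow_le_rpow hxy (neg_nonneg.2 hz))
  rwa [← rpow_neg, ← rpow_neg, neg_neg] at h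

theorem mul_pow_rpow {x r : ℝ≥0∞} (hx : x ≠ 0) (hr : r ≠ 0) (k : ℕ) (θ : ℝ) :
    (x * r ^ k) ^ θ = x ^ θ * (r ^ θ) ^ k := by
  rw [mul_rpow_of_ne_zero hx (pow_ne_zero k hr), ← rpow_natCast, ← rpow_natCast, ← rpow_mul,
    ← rpow_mul, mul_comm (k : ℝ) θ]

theorem tsum_mul_pow_rpow_mul {x r : ℝ≥0∞} (hx0 : x ≠ 0) (hx : x ≠ ∞) (hr0 : r ≠ 0) (hr : r ≠ ∞)
    (M : ℝ≥0∞) (θ δ : ℝ) :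
    ∑' k : ℕ, (x * r ^ k) ^ θ * (M * (x * r ^ (k + 1)) ^ δ)
      = M * x ^ (θ + δ) * r ^ δ * (1 - r ^ (θ + δ))⁻¹ := by
  have hterm : ∀ k : ℕ, (x * r ^ k) ^ θ * (M * (x * r ^ (k + 1)) ^ δ)
      = M * x ^ (θ + δ) * r ^ δ * (r ^ (θ + δ)) ^ k := fun k => by
    rw [mul_pow_rpow hx0 hr0, mul_pow_rpow hx0 hr0, rpow_add _ _ hx0 hx, rpow_add _ _ hr0 hr]
    ring
  rw [tsum_congr hterm, ENNReal.tsum_mul_left, tsum_geometric]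

theorem rpow_mul_inv_one_sub_rpow_ne_zero {r : ℝ≥0∞} (hr0 : r ≠ 0) (hr : r ≠ ∞) (δ κ : ℝ) :
    r ^ δ * (1 - r ^ κ)⁻¹ ≠ 0 :=
  mul_ne_zero (rpow_pos (pos_iff_ne_zero.2 hr0) hr).ne'
    (ENNReal.inv_ne_zero.2 (ne_top_of_le_ne_top one_ne_top tsub_le_self))

theorem rpow_mul_inv_one_sub_rpow_ne_top {r : ℝ≥0∞} (hr0 : r ≠ 0) (hr : r < 1) (δ : ℝ) {κ : ℝ}
    (hκ : 0 < κ) : r ^ δ * (1 - r ^ κ)⁻¹ ≠ ∞ :=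
  mul_ne_top (rpow_ne_top_of_ne_zero hr0 hr.ne_top)
    (ENNReal.inv_ne_top.2 (tsub_pos_of_lt (rpow_lt_one hr hκ)).ne')

theorem rpow_mul_rpow_one_div_eq {x : ℝ≥0∞} (hx0 : x ≠ 0) (hx : x ≠ ∞) (C K : ℝ≥0∞) {q α κ : ℝ}
    (hq : 0 < q) (h : α + κ / q = 0) :
    x ^ α * (C ^ q * x ^ κ * K) ^ (1 / q) = C * K ^ (1 / q) := by
  have h1q : 0 ≤ 1 / q := by positivity
  rw [mul_rpow_of_nonneg _ _ h1q, mul_rpow_of_nonneg _ _ h1q, ← rpow_mul C, ← rpow_mul x,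
    mul_one_div_cancel hq.ne', rpow_one, mul_one_div]
  calc x ^ α * (C * x ^ (κ / q) * K ^ (1 / q))
      = x ^ (α + κ / q) * (C * K ^ (1 / q)) := by rw [rpow_add _ _ hx0 hx]; ring
    _ = C * K ^ (1 / q) := by rw [h, rpow_zero, one_mul]

end ENNReal

section Dyadic

variable {α : Type*} {g : α → ℝ≥0∞} {x r : ℝ≥0∞}

/-- The least `k` with `x r^(k+1) < g s` also has `g s ≤ x r^k`. -/
theorem rpow_le_tsum_indicator_dyadic (hx : x ≠ ∞) (hr : r < 1) {s : α} (hgx : g s ≤ x)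
    {θ : ℝ} (hθ : 0 < θ) :
    g s ^ θ ≤ ∑' k : ℕ, {s | x * r ^ (k + 1) < g s}.indicator (fun _ => (x * r ^ k) ^ θ) s := by
  classical
  rcases eq_or_ne (g s) 0 with hgs | hgs
  · simp [hgs, ENNReal.zero_rpow_of_pos hθ]
  have hlim : Tendsto (fun n : ℕ => x * r ^ (n + 1)) atTop (𝓝 0) := by
    simpa using ENNReal.Tendsto.const_mul
      ((ENNReal.tendsto_pow_atTop_nhds_zero_of_lt_one hr).comp (tendsto_add_atTop_nat 1))
      (Or.inr hx)
  have hex : ∃ n : ℕ, x * r ^ (n + 1) < g s :=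
    (hlim.eventually (gt_mem_nhds (pos_iff_ne_zero.2 hgs))).exists
  have hk := Nat.find_spec hex
  have hle : g s ≤ x * r ^ Nat.find hex := by
    rcases Nat.eq_zero_or_eq_succ_pred (Nat.find hex) with h0 | hsucc
    · simpa [h0] using hgx
    · rw [hsucc]
      exact not_lt.1 (Nat.find_min hex (by omega : Nat.find hex - 1 < Nat.find hex))
  refine le_trans ?_ (ENNReal.le_tsum (Nat.find hex))
  rw [indicator_of_mem (show s ∈ {s | x * r ^ (Nat.find hex + 1) < g s} from hk)]
  exact ENNReal.rpow_le_rpow hle hθ.le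

variable [MeasurableSpace α] {μ : Measure α}

theorem lintegral_rpow_le_tsum_dyadic (hg : Measurable g) (hx : x ≠ ∞) (hr : r < 1)
    (hgx : ∀ᵐ s ∂μ, g s ≤ x) {θ : ℝ} (hθ : 0 < θ) :
    ∫⁻ s, g s ^ θ ∂μ ≤ ∑' k : ℕ, (x * r ^ k) ^ θ * μ {s | x * r ^ (k + 1) < g s} := by
  have hmeas : ∀ k : ℕ, MeasurableSet {s | x * r ^ (k + 1) < g s} := fun k =>
    measurableSet_lt measurable_const hg
  calc ∫⁻ s, g s ^ θ ∂μ
      ≤ ∫⁻ s, ∑' k : ℕ, {s | x * r ^ (k + 1) < g s}.indicator (fun _ => (x * r ^ k) ^ θ) s ∂μ :=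
        lintegral_mono_ae (hgx.mono fun s hs => rpow_le_tsum_indicator_dyadic hx hr hs hθ)
    _ = ∑' k : ℕ, (x * r ^ k) ^ θ * μ {s | x * r ^ (k + 1) < g s} := by
        rw [lintegral_tsum fun k => (measurable_const.indicator (hmeas k)).aemeasurable]
        exact tsum_congr fun k => lintegral_indicator_const (hmeas k) _

theorem lintegral_rpow_le_of_meas_lt_le (hg : Measurable g) (hx0 : x ≠ 0) (hx : x ≠ ∞)
    (hr0 : r ≠ 0) (hr : r < 1) (hgx : ∀ᵐ s ∂μ, g s ≤ x) {θ δ : ℝ} (hθ : 0 < θ) {M : ℝ≥0∞}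
    (hdist : ∀ l : ℝ≥0∞, l ≠ 0 → μ {s | l < g s} ≤ M * l ^ δ) :
    ∫⁻ s, g s ^ θ ∂μ ≤ M * x ^ (θ + δ) * r ^ δ * (1 - r ^ (θ + δ))⁻¹ := by
  rw [← ENNReal.tsum_mul_pow_rpow_mul hx0 hx hr0 hr.ne_top]
  refine (lintegral_rpow_le_tsum_dyadic hg hx hr hgx hθ).trans (ENNReal.tsum_le_tsum fun k => ?_)
  exact mul_le_mul_right (hdist _ (mul_ne_zero hx0 (pow_ne_zero _ hr0))) _

end Dyadic

/-- Because every `s < t` is covered by some `Ioo y t`, `y ∈ S`, except possibly `min S`, and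
countably many `y` suffice. -/
theorem measure_le_of_forall_measure_Ioo_le {ν : Measure ℝ} [NullSingletonClass ν] {S : Set ℝ}
    {t : ℝ} {B : ℝ≥0∞} (hS : S ⊆ Iio t) (h : ∀ y ∈ S, ν (Ioo y t) ≤ B) : ν S ≤ B := by
  obtain ⟨T, hTc, hT⟩ :=
    TopologicalSpace.isOpen_iUnion_countable (fun y : S => Ioi (y : ℝ)) fun _ => isOpen_Ioi
  have hcover : S ⊆ (S ∩ lowerBounds S) ∪ ⋃ y : T, Ioo ((y : S) : ℝ) t := by
    intro s hs
    by_cases hlb : s ∈ lowerBounds S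
    · exact Or.inl ⟨hs, hlb⟩
    obtain ⟨y, hyS, hys⟩ : ∃ y ∈ S, y < s := by simpa [lowerBounds] using hlb
    have : s ∈ ⋃ i ∈ T, Ioi ((i : S) : ℝ) := hT ▸ mem_iUnion.2 ⟨⟨y, hyS⟩, hys⟩
    obtain ⟨i, hiT, hi⟩ := mem_iUnion₂.1 this
    exact Or.inr (mem_iUnion.2 ⟨⟨i, hiT⟩, hi, hS hs⟩)
  have hmin : (S ∩ lowerBounds S).Subsingleton := fun y hy z hz =>
    le_antisymm (hy.2 hz.1) (hz.2 hy.1)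
  have : Countable T := hTc.to_subtype
  have hdir : Directed (· ⊆ ·) fun y : T => Ioo ((y : S) : ℝ) t :=
    Antitone.directed_le fun y z hyz => Ioo_subset_Ioo_left hyz
  calc ν S ≤ ν (S ∩ lowerBounds S) + ν (⋃ y : T, Ioo ((y : S) : ℝ) t) :=
        (measure_mono hcover).trans (measure_union_le _ _)
    _ = ⨆ y : T, ν (Ioo ((y : S) : ℝ) t) := by
        rw [hmin.measure_zero, zero_add, hdir.measure_iUnion]
    _ ≤ B := iSup_le fun y => h _ (y : S).2

theorem measurableSet_EIoo (a b : EReal) : MeasurableSet (EIoo a b) :=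
  measurableSet_Ioo.preimage continuous_coe_real_ereal.measurable

theorem EIoo_subset_EIoo {a a' b b' : EReal} (ha : a' ≤ a) (hb : b ≤ b') :
    EIoo a b ⊆ EIoo a' b' :=
  preimage_mono (Ioo_subset_Ioo ha hb)

/-- `U = V^{p'}`. -/
noncomputable def Up (a : EReal) (p : ℝ) (v : ℝ → ℝ≥0∞) (t : ℝ) : ℝ≥0∞ :=
  ∫⁻ s in EIoo a (t : EReal), v s ^ (1 - p / (p - 1))

section Hardy

variable {a b : EReal} {p q : ℝ} {v w : ℝ → ℝ≥0∞} {C : ℝ≥0∞}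

theorem Vp_eq_Up_rpow (t : ℝ) : Vp a p v t = Up a p v t ^ ((p - 1) / p) := rfl

theorem Up_mono : Monotone (Up a p v) := fun _ _ h =>
  lintegral_mono_set (EIoo_subset_EIoo le_rfl (EReal.coe_le_coe_iff.2 h))

theorem rpow_one_sub_conj_rpow_mul_self {u : ℝ≥0∞} (hu0 : u ≠ 0) (huT : u ≠ ∞) (hp : 1 < p) :
    (u ^ (1 - p / (p - 1))) ^ p * u = u ^ (1 - p / (p - 1)) := by
  have hp1 : p - 1 ≠ 0 := by linarith
  rw [← ENNReal.rpow_mul]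
  nth_rewrite 2 [← ENNReal.rpow_one u]
  rw [← ENNReal.rpow_add _ _ hu0 huT]
  congr 1
  field_simp
  ring

theorem lintegral_indicator_rpow_mul_eq_Up (hp : 1 < p) (hv : IsWeight a b v) {x : ℝ}
    (hxb : (x : EReal) ≤ b) :
    ∫⁻ s in EIoo a b, (EIoo a x).indicator (fun s => v s ^ (1 - p / (p - 1))) s ^ p * v s
      = Up a p v x := by
  have hsub : EIoo a x ⊆ EIoo a b := EIoo_subset_EIoo le_rfl hxb
  have hind : ∀ s, (EIoo a x).indicator (fun s => v s ^ (1 - p / (p - 1))) s ^ p * v s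
      = (EIoo a x).indicator (fun s => (v s ^ (1 - p / (p - 1))) ^ p * v s) s := fun s => by
    by_cases hs : s ∈ EIoo a x
    · simp only [indicator_of_mem hs]
    · simp only [indicator_of_notMem hs, ENNReal.zero_rpow_of_pos (by linarith : 0 < p), zero_mul]
  rw [lintegral_congr hind, lintegral_indicator (measurableSet_EIoo a x),
    Measure.restrict_restrict (measurableSet_EIoo a x), inter_eq_self_of_subset_left hsub]
  refine setLIntegral_congr_fun_ae (measurableSet_EIoo a x) ?_
  filter_upwards [(ae_restrict_iff' (measurableSet_EIoo a b)).1 hv.2] with s hs hsx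
  exact rpow_one_sub_conj_rpow_mul_self (hs (hsub hsx)).1 (hs (hsub hsx)).2 hp

/-- The test function is `v^{1-p'}` on `(a,x)`: its primitive is constant `U(x)` on `(x,b)` and
`∫ f^p v = U(x)`. -/
theorem HardyP.rpow_mul_lintegral_le (hH : HardyP a b p q v w C) (hp : 1 < p) (hq : 0 < q)
    (hv : IsWeight a b v) (hw : Measurable w) {x : ℝ} (hax : a < x) (hxb : (x : EReal) < b) :
    Up a p v x ^ q * ∫⁻ s in EIoo x b, w s ≤ C ^ q * Up a p v x ^ (q / p) := by
  set f := (EIoo a x).indicator fun s => v s ^ (1 - p / (p - 1))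
  have hf : Measurable f := (hv.1.pow_const _).indicator (measurableSet_EIoo a x)
  have hprim : ∀ t ∈ EIoo x b, ∫⁻ s in EIoo a t, f s = Up a p v x := fun t ht => by
    rw [lintegral_indicator (measurableSet_EIoo a x), Measure.restrict_restrict
      (measurableSet_EIoo a x), inter_eq_self_of_subset_left (EIoo_subset_EIoo le_rfl ht.1.le)]
    rfl
  calc Up a p v x ^ q * ∫⁻ s in EIoo x b, w s
      = ∫⁻ t in EIoo x b, (∫⁻ s in EIoo a t, f s) ^ q * w t := by
        rw [← lintegral_const_mul _ hw]
        exact (setLIntegral_congr_fun (measurableSet_EIoo x b) fun t ht => by rw [hprim t ht]).symm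
    _ ≤ ∫⁻ t in EIoo a b, (∫⁻ s in EIoo a t, f s) ^ q * w t :=
        lintegral_mono_set (EIoo_subset_EIoo hax.le le_rfl)
    _ = ((∫⁻ t in EIoo a b, (∫⁻ s in EIoo a t, f s) ^ q * w t) ^ (1 / q)) ^ q := by
        rw [one_div, ENNReal.rpow_inv_rpow hq.ne']
    _ ≤ (C * (∫⁻ s in EIoo a b, f s ^ p * v s) ^ (1 / p)) ^ q :=
        ENNReal.rpow_le_rpow (hH f hf) hq.le
    _ = C ^ q * Up a p v x ^ (q / p) := by
        rw [lintegral_indicator_rpow_mul_eq_Up hp hv hxb.le, ENNReal.mul_rpow_of_nonneg _ _ hq.le,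
          ← ENNReal.rpow_mul, one_div_mul_eq_div]

theorem HardyP.lintegral_EIoo_le (hH : HardyP a b p q v w C) (hp : 1 < p) (hq : 0 < q)
    (hv : IsWeight a b v) (hw : Measurable w) {x : ℝ} (hax : a < x) (hxb : (x : EReal) < b)
    (hU0 : Up a p v x ≠ 0) (hUT : Up a p v x ≠ ∞) :
    ∫⁻ s in EIoo x b, w s ≤ C ^ q * Up a p v x ^ (q / p - q) := by
  have hcancel : Up a p v x ^ (-q) * Up a p v x ^ q = 1 := by
    rw [← ENNReal.rpow_add _ _ hU0 hUT, neg_add_cancel, ENNReal.rpow_zero]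
  calc ∫⁻ s in EIoo x b, w s
      = Up a p v x ^ (-q) * (Up a p v x ^ q * ∫⁻ s in EIoo x b, w s) := by
        rw [← mul_assoc, hcancel, one_mul]
    _ ≤ Up a p v x ^ (-q) * (C ^ q * Up a p v x ^ (q / p)) :=
        mul_le_mul_right (hH.rpow_mul_lintegral_le hp hq hv hw hax hxb) _
    _ = C ^ q * Up a p v x ^ (q / p - q) := by
        rw [sub_eq_add_neg, ENNReal.rpow_add _ _ hU0 hUT]
        ring

theorem HardyP.withDensity_superlevel_le (hH : HardyP a b p q v w C) (hp : 1 < p) (hq : 0 < q)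
    (hv : IsWeight a b v) (hw : Measurable w) {t : ℝ} (htb : (t : EReal) < b)
    (hUt : Up a p v t ≠ ∞) (l : ℝ≥0∞) :
    volume.withDensity w (EIoo a t ∩ {s | l < Up a p v s}) ≤ C ^ q * l ^ (q / p - q) := by
  have hδ : q / p - q ≤ 0 := by
    rw [sub_nonpos, div_le_iff₀ (by linarith)]
    nlinarith
  refine measure_le_of_forall_measure_Ioo_le (fun s hs => EReal.coe_lt_coe_iff.1 hs.1.2) ?_
  rintro y ⟨⟨hay, hyt⟩, hly⟩
  have hUy0 : Up a p v y ≠ 0 := (lt_of_le_of_lt zero_le hly).ne'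
  have hUyT : Up a p v y ≠ ∞ :=
    ne_top_of_le_ne_top hUt (Up_mono (EReal.coe_lt_coe_iff.1 hyt).le)
  calc volume.withDensity w (Ioo y t)
      ≤ volume.withDensity w (EIoo y b) :=
        measure_mono fun s hs =>
          ⟨EReal.coe_lt_coe_iff.2 hs.1, (EReal.coe_lt_coe_iff.2 hs.2).trans htb⟩
    _ ≤ C ^ q * Up a p v y ^ (q / p - q) := by
        rw [withDensity_apply _ (measurableSet_EIoo _ _)]
        exact hH.lintegral_EIoo_le hp hq hv hw hay (hyt.trans htb) hUy0 hUyT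
    _ ≤ C ^ q * l ^ (q / p - q) :=
        mul_le_mul_right (ENNReal.rpow_le_rpow_of_nonpos hly.le hδ) _

theorem setLIntegral_Up_rpow_mul_eq_zero {t : ℝ} (h0 : Up a p v t = 0) {θ : ℝ} (hθ : 0 < θ) :
    ∫⁻ s in EIoo a t, Up a p v s ^ θ * w s = 0 := by
  refine (setLIntegral_congr_fun (measurableSet_EIoo a t) fun s hs => ?_).trans lintegral_zero
  have hs0 : Up a p v s ≤ Up a p v t := Up_mono (EReal.coe_lt_coe_iff.1 hs.2).le
  rw [h0, nonpos_iff_eq_zero] at hs0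
  rw [hs0, ENNReal.zero_rpow_of_pos hθ, zero_mul]

theorem HardyP.setLIntegral_Up_rpow_mul_le (hH : HardyP a b p q v w C) (hp : 1 < p)
    (hq : 0 < q) (hv : IsWeight a b v) (hw : Measurable w) {t : ℝ} (htb : (t : EReal) < b)
    (hU0 : Up a p v t ≠ 0) (hUT : Up a p v t ≠ ∞) {θ : ℝ} (hθ : 0 < θ) :
    ∫⁻ s in EIoo a t, Up a p v s ^ θ * w s
      ≤ C ^ q * Up a p v t ^ (θ + (q / p - q)) * 2⁻¹ ^ (q / p - q)
          * (1 - 2⁻¹ ^ (θ + (q / p - q)))⁻¹ := by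
  have hU : Measurable (Up a p v) := Up_mono.measurable
  have hlhs : ∫⁻ s in EIoo a t, Up a p v s ^ θ * w s
      = ∫⁻ s, Up a p v s ^ θ ∂(volume.withDensity w).restrict (EIoo a t) := by
    rw [setLIntegral_withDensity_eq_setLIntegral_mul _ hw (hU.pow_const θ) (measurableSet_EIoo a t)]
    simp only [Pi.mul_apply, mul_comm]
  rw [hlhs]
  refine lintegral_rpow_le_of_meas_lt_le hU hU0 hUT (by norm_num)
    (ENNReal.inv_lt_one.2 ENNReal.one_lt_two)
    (ae_restrict_of_forall_mem (measurableSet_EIoo a t) fun s hs =>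
      Up_mono (EReal.coe_lt_coe_iff.1 hs.2).le) hθ fun l _ => ?_
  rw [Measure.restrict_apply (measurableSet_lt measurable_const hU), inter_comm]
  exact hH.withDensity_superlevel_le hp hq hv hw htb hUT l

end Hardy

/-- necessity in the convex case `1 < p ≤ q < ∞`: if the Hardy inequality
holds with constant `C`, then `A_ε ≤ c · C` for every `ε > 0`, where `c` depends
only on `p, q, ε`. -/
theorem stmt4 (p q : ℝ) (hp : 1 < p) (hpq : p ≤ q) :
    ∀ ε : ℝ, 0 < ε → ∃ c : ℝ≥0∞, 0 < c ∧ c ≠ ∞ ∧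
      ∀ (a b : EReal), a < b →
        ∀ v w : ℝ → ℝ≥0∞, IsWeight a b v → IsWeight a b w →
          ∀ C : ℝ≥0∞, 0 < C → C ≠ ∞ → HardyP a b p q v w C →
            Aeps a b q ε (Vp a p v) w ≤ c * C := by
  intro ε hε
  have hq : 0 < q := by linarith
  set θ := (p - 1) / p * (q * (ε + 1))
  set δ := q / p - q
  have hθ : 0 < θ := mul_pos (div_pos (by linarith) (by linarith)) (by positivity)
  have hκ : θ + δ = q * ε * ((p - 1) / p) := by simp only [θ, δ]; field_simp; ring
  have hκ0 : 0 < θ + δ := by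
    rw [hκ]; exact mul_pos (by positivity) (div_pos (by linarith) (by linarith))
  have hr0 : (2⁻¹ : ℝ≥0∞) ≠ 0 := ENNReal.inv_ne_zero.2 ENNReal.ofNat_ne_top
  set K : ℝ≥0∞ := 2⁻¹ ^ δ * (1 - 2⁻¹ ^ (θ + δ))⁻¹
  have hKT : K ≠ ∞ :=
    ENNReal.rpow_mul_inv_one_sub_rpow_ne_top hr0 (ENNReal.inv_lt_one.2 ENNReal.one_lt_two) δ hκ0
  refine ⟨K ^ (1 / q), ENNReal.rpow_pos (pos_iff_ne_zero.2
    (ENNReal.rpow_mul_inv_one_sub_rpow_ne_zero hr0 (by norm_num) δ _)) hKT,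
    ENNReal.rpow_ne_top_of_nonneg (by positivity) hKT, fun a b _ v w hv hw C _ _ hH => ?_⟩
  refine iSup₂_le fun t ht => ?_
  simp only [Vp_eq_Up_rpow, ← ENNReal.rpow_mul]
  rcases eq_or_ne (Up a p v t) 0 with h0 | h0
  · rw [setLIntegral_Up_rpow_mul_eq_zero h0 hθ, ENNReal.zero_rpow_of_pos (by positivity), mul_zero]
    exact zero_le
  rcases eq_or_ne (Up a p v t) ∞ with hT | hT
  · rw [hT, ENNReal.top_rpow_of_neg (by nlinarith), zero_mul]
    exact zero_le
  calc _ ≤ Up a p v t ^ ((p - 1) / p * -ε) * (C ^ q * Up a p v t ^ (θ + δ) * K) ^ (1 / q) := by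
        refine mul_le_mul_right (ENNReal.rpow_le_rpow ?_ (by positivity)) _
        exact (hH.setLIntegral_Up_rpow_mul_le hp hq hv hw.1 ht.2 h0 hT hθ).trans_eq
          (mul_assoc _ _ _)
    _ = K ^ (1 / q) * C := by
        rw [ENNReal.rpow_mul_rpow_one_div_eq h0 hT C K hq (by rw [hκ]; field_simp; ring), mul_comm]
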